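/- arXiv:2310.17234 — 2 statements merged into one kernel-verified Lean document; each statement's English description precedes it below -/
import Mathlib

section
/- In the satisfiability game M_φ with imperfect information, where the verifier's observation at each step is only the current literal position, the verifier has a uniform strategy (a function from positions Fin k to Bool) guaranteeing that every outcome path reaches q⊤, if and only if the CNF formula φ is satisfiable. -/
/-- States of the satisfiability game `M_φ`. -/
inductive SatGameState (n k : ℕ) : Type
  | init : SatGameState n k
  | pos (c : Fin n) (j : ℕ) : SatGameState n k
  | win : SatGameState n k
  | lose : SatGameState n k

open SatGameState in
/-- Transition relation of the satisfiability game when the verifier follows the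
uniform (imperfect-information) strategy `s : Fin k → Bool`, which depends only
on the observed literal position: the refuter chooses a clause at the start,
and at position `j` the verifier declares the value `s j`. -/
inductive SatGameStratStep {n k : ℕ} (cls : Fin n → Fin k → Option Bool)
    (s : Fin k → Bool) : SatGameState n k → SatGameState n k → Prop
  | start (c : Fin n) : SatGameStratStep cls s init (pos c 0)
  | sat (c : Fin n) (j : ℕ) (h : j < k) (hb : cls c ⟨j, h⟩ = some (s ⟨j, h⟩)) :
      SatGameStratStep cls s (pos c j) win
  | next (c : Fin n) (j : ℕ) (h : j < k) (hb : cls c ⟨j, h⟩ ≠ some (s ⟨j, h⟩)) :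
      SatGameStratStep cls s (pos c j) (pos c (j + 1))
  | toLose (c : Fin n) : SatGameStratStep cls s (pos c k) lose
  | winLoop : SatGameStratStep cls s win win
  | loseLoop : SatGameStratStep cls s lose lose

open SatGameState

lemma satGame_inv_init {n k : ℕ} {cls : Fin n → Fin k → Option Bool} {s : Fin k → Bool}
    {t : SatGameState n k} (h : SatGameStratStep cls s init t) :
    ∃ c, t = pos c 0 := by
  cases h with
  | start c => exact ⟨c, rfl⟩

lemma satGame_inv_pos {n k : ℕ} {cls : Fin n → Fin k → Option Bool} {s : Fin k → Bool}
    {c : Fin n} {i : ℕ} {t : SatGameState n k}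
    (h : SatGameStratStep cls s (pos c i) t) :
    t = win ∨ (∃ hi : i < k, cls c ⟨i, hi⟩ ≠ some (s ⟨i, hi⟩) ∧ t = pos c (i + 1))
      ∨ (i = k ∧ t = lose) := by
  cases h with
  | sat c j hj hb => exact Or.inl rfl
  | next c j hj hb => exact Or.inr (Or.inl ⟨hj, hb, rfl⟩)
  | toLose c => exact Or.inr (Or.inr ⟨rfl, rfl⟩)

open SatGameState in
/-- The verifier has a uniform strategy `s : Fin k → Bool` such that every
outcome path of the game reaches the winning state `q⊤`, iff the CNF formula
(with clauses `cls`) is satisfiable. -/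
theorem satGame_uniform_winning_iff_satisfiable {n k : ℕ}
    (cls : Fin n → Fin k → Option Bool) :
    (∃ s : Fin k → Bool, ∀ p : ℕ → SatGameState n k, p 0 = init →
        (∀ m, SatGameStratStep cls s (p m) (p (m + 1))) → ∃ m, p m = win) ↔
      (∃ v : Fin k → Bool, ∀ c : Fin n, ∃ j : Fin k, ∃ b : Bool,
        cls c j = some b ∧ v j = b) := by
  constructor
  · rintro ⟨s, hs⟩
    refine ⟨s, fun c => ?_⟩
    by_contra hcon
    push_neg at hcon
    have hne : ∀ j : Fin k, cls c j ≠ some (s j) := by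
      intro j hj
      exact (hcon j (s j) hj) rfl
    set p : ℕ → SatGameState n k := fun m => match m with
      | 0 => init
      | m + 1 => if m ≤ k then pos c m else lose with hp
    have hstep : ∀ m, SatGameStratStep cls s (p m) (p (m + 1)) := by
      intro m
      match m with
      | 0 =>
        have h1 : p 1 = pos c 0 := by simp [hp]
        have h0 : p 0 = init := rfl
        rw [h0, h1]
        exact SatGameStratStep.start c
      | m + 1 =>
        rcases lt_trichotomy m k with hm | hm | hm
        · have h1 : p (m + 1) = pos c m := by simp [hp, hm.le]
          have h2 : p (m + 2) = pos c (m + 1) := by simp [hp, Nat.succ_le_of_lt hm]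
          rw [h1, h2]
          exact SatGameStratStep.next c m hm (hne ⟨m, hm⟩)
        · subst hm
          have h1 : p (m + 1) = pos c m := by simp [hp]
          have h2 : p (m + 2) = lose := by simp [hp]
          rw [h1, h2]
          exact SatGameStratStep.toLose c
        · have h1 : p (m + 1) = lose := by simp [hp, not_le.mpr hm]
          have h2 : p (m + 2) = lose := by
            have : ¬ (m + 1 ≤ k) := by omega
            simp [hp, this]
          rw [h1, h2]
          exact SatGameStratStep.loseLoop
    obtain ⟨m, hm⟩ := hs p rfl hstep
    match m, hm with
    | 0, hm => simp [hp] at hm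
    | m + 1, hm =>
      simp only [hp] at hm
      split at hm <;> simp at hm
  · rintro ⟨v, hv⟩
    refine ⟨v, fun p h0 hstep => ?_⟩
    have h1 := hstep 0
    rw [h0] at h1
    obtain ⟨c, hc1⟩ := satGame_inv_init h1
    obtain ⟨j, b, hcl, hvb⟩ := hv c
    have hclv : cls c j = some (v j) := by rw [hcl, hvb]
    -- either we reach win, or we march along pos c i
    have key : ∀ i : ℕ, i ≤ j.val → (∃ m, p m = win) ∨ p (i + 1) = pos c i := by
      intro i hi
      induction i with
      | zero => exact Or.inr hc1
      | succ i ih =>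
        rcases ih (Nat.le_of_succ_le hi) with hw | hpos
        · exact Or.inl hw
        · have hstep' := hstep (i + 1)
          rw [hpos] at hstep'
          rcases satGame_inv_pos hstep' with hw | ⟨hik, _, heq⟩ | ⟨hik, _⟩
          · exact Or.inl ⟨i + 2, hw⟩
          · exact Or.inr heq
          · exfalso; have := j.isLt; omega
    rcases key j.val le_rfl with hw | hpos
    · exact hw
    · have hstep' := hstep (j.val + 1)
      rw [hpos] at hstep'
      rcases satGame_inv_pos hstep' with hw | ⟨hik, hne, _⟩ | ⟨hik, _⟩
      · exact ⟨j.val + 2, hw⟩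
      · exact absurd hclv (by simpa using hne)
      · exfalso; have := j.isLt; omega
end

section
/- In an n-counter iCGS with counters bounded by N₀+k, every sequence of transitions feasible under bound N₀ is also feasible under bound N₀+k for any k ≥ 0; consequently, if an agent has a strategy enforcing an objective in the bounded model M_{N₀,0}, the same strategy enforces the objective in every M_{N₀,k} restricted to configurations reachable in M_{N₀,0}. -/
/-- Positive Boolean combinations of conditions `c_i > 0` over `n` counters. -/
inductive Guard (n : ℕ) : Type
  | pos (i : Fin n) : Guard n
  | and (g₁ g₂ : Guard n) : Guard n
  | or (g₁ g₂ : Guard n) : Guard n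

/-- Evaluation of a guard on a counter valuation. -/
def Guard.eval {n : ℕ} : Guard n → (Fin n → ℕ) → Prop
  | .pos i, c => 0 < c i
  | .and g₁ g₂, c => g₁.eval c ∧ g₂.eval c
  | .or g₁ g₂, c => g₁.eval c ∨ g₂.eval c

/-- Apply one counter operation under the cap `B`: `(i, true)` increments
counter `i` (an attempt to increment beyond `B` leaves it unchanged),
`(i, false)` decrements it (truncated at `0`). -/
def applyOp {n : ℕ} (B : ℕ) (op : Fin n × Bool) (c : Fin n → ℕ) : Fin n → ℕ :=
  fun j =>
    if j = op.1 then
      if op.2 then (if c j < B then c j + 1 else c j) else c j - 1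
    else c j

/-- Apply a list of counter operations under the cap `B`. -/
def applyOps {n : ℕ} (B : ℕ) (ops : List (Fin n × Bool)) (c : Fin n → ℕ) :
    Fin n → ℕ :=
  ops.foldl (fun c op => applyOp B op c) c

/-- One step of the `B`-bounded semantics of an `n`-counter iCGS with state
space `Q` and transition table `T` (state, guard, updates, successor state). -/
def BoundedStep {n : ℕ} {Q : Type*}
    (T : Set (Q × Guard n × List (Fin n × Bool) × Q)) (B : ℕ)
    (x y : Q × (Fin n → ℕ)) : Prop :=
  ∃ g ops, (x.1, g, ops, y.1) ∈ T ∧ g.eval x.2 ∧ y.2 = applyOps B ops x.2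

lemma guard_mono {n : ℕ} (g : Guard n) (c d : Fin n → ℕ)
    (hle : ∀ j, c j ≤ d j) (h : g.eval c) : g.eval d := by
  induction g with
  | pos i => exact lt_of_lt_of_le h (hle i)
  | and g₁ g₂ ih₁ ih₂ => exact ⟨ih₁ h.1, ih₂ h.2⟩
  | or g₁ g₂ ih₁ ih₂ => exact h.imp ih₁ ih₂

lemma applyOp_mono {n : ℕ} (N₀ k : ℕ) (op : Fin n × Bool) (c d : Fin n → ℕ)
    (hle : ∀ j, c j ≤ d j) : ∀ j, applyOp N₀ op c j ≤ applyOp (N₀ + k) op d j := by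
  intro j
  have := hle j
  unfold applyOp
  split
  · split
    · split <;> split <;> omega
    · omega
  · exact hle j

lemma applyOps_mono {n : ℕ} (N₀ k : ℕ) (ops : List (Fin n × Bool)) :
    ∀ c d : Fin n → ℕ, (∀ j, c j ≤ d j) →
      ∀ j, applyOps N₀ ops c j ≤ applyOps (N₀ + k) ops d j := by
  induction ops with
  | nil => intro c d h j; exact h j
  | cons op ops ih =>
      intro c d h j
      exact ih _ _ (applyOp_mono N₀ k op c d h) j

/-- Saturation property behind Theorem 5.4: every sequence of transitions
feasible in the `(N₀,0)`-bounded model `M_{N₀,0}` is also feasible in the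
`(N₀,k)`-bounded model `M_{N₀,k}`: any run of `M_{N₀,0}` (a sequence of states
`ρ` with counter valuations `c`) can be accompanied by counter valuations `d`,
starting from the same initial valuation, realizing the same state sequence in
`M_{N₀,k}`. Consequently a strategy enforcing an objective in `M_{N₀,0}` also
enforces it in every `M_{N₀,k}`. -/
theorem bounded_run_embeds {n : ℕ} {Q : Type*}
    (T : Set (Q × Guard n × List (Fin n × Bool) × Q)) (N₀ k : ℕ)
    (ρ : ℕ → Q) (c : ℕ → Fin n → ℕ)
    (hrun : ∀ m, BoundedStep T N₀ (ρ m, c m) (ρ (m + 1), c (m + 1))) :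
    ∃ d : ℕ → Fin n → ℕ, d 0 = c 0 ∧
      ∀ m, BoundedStep T (N₀ + k) (ρ m, d m) (ρ (m + 1), d (m + 1)) := by
  classical
  choose g ops hT heval hupd using hrun
  let d : ℕ → Fin n → ℕ := fun m => Nat.rec (c 0)
    (fun m dm => applyOps (N₀ + k) (ops m) dm) m
  have hle : ∀ m j, c m j ≤ d m j := by
    intro m
    induction m with
    | zero => intro j; exact le_refl _
    | succ m ih =>
        intro j
        have h1 : c (m + 1) j = applyOps N₀ (ops m) (c m) j := congrFun (hupd m) j
        rw [h1]
        exact applyOps_mono N₀ k (ops m) (c m) (d m) ih j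
  refine ⟨d, rfl, fun m => ⟨g m, ops m, hT m, ?_, rfl⟩⟩
  exact guard_mono _ _ _ (hle m) (heval m)
end
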